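/- Let K ⊆ {1, …, n} be a set of indices (the support set), let (vᵢ)_{i∈K} be independent real-valued random variables each of whose distribution (law) is atomless, and set vᵢ = 0 for i ∉ K. For subsets Mᵢ, Mⱼ ⊆ {1, …, n} and nonzero real weights, let cᵢ = ∑_{l∈Mᵢ} w_{li}·v_l and cⱼ = ∑_{l∈Mⱼ} w_{lj}·v_l. If Mᵢ ∩ K ≠ Mⱼ ∩ K, then ℙ[cᵢ = cⱼ] = 0. -/

import Mathlib

/-!
On the support `K` the difference of the two check values is a linear form `∑ l ∈ K, a l * v l`,
and `a l₀ ≠ 0` at any `l₀ ∈ K` lying in exactly one of the two neighbourhoods. Isolating that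
term, the event becomes `S = -a l₀ * v l₀` with `S` independent of `v l₀`. The joint law of the
two sides is a product measure, so by Fubini the probability of the diagonal is an average of
atoms of the law of `-a l₀ * v l₀`, all of which vanish.
-/

open MeasureTheory ProbabilityTheory

theorem ProbabilityTheory.IndepFun.measure_setOf_eq_eq_zero {Ω β : Type*} [MeasurableSpace Ω]
    [MeasurableSpace β] [MeasurableEq β] {μ : Measure Ω} [IsFiniteMeasure μ] {f g : Ω → β}
    (hfg : IndepFun f g μ) (hf : Measurable f) (hg : Measurable g)
    (hg_atomless : ∀ c, μ.map g {c} = 0) :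
    μ {ω | f ω = g ω} = 0 := by
  have hdiag : MeasurableSet (Set.diagonal β) := measurableSet_diagonal
  have hslice (x : β) : Prod.mk x ⁻¹' Set.diagonal β = {x} := by
    ext y; simp [eq_comm]
  calc μ {ω | f ω = g ω} = μ.map (fun ω => (f ω, g ω)) (Set.diagonal β) := by
        rw [Measure.map_apply (hf.prodMk hg) hdiag]; rfl
    _ = ((μ.map f).prod (μ.map g)) (Set.diagonal β) := by
        rw [(indepFun_iff_map_prod_eq_prod_map_map hf.aemeasurable hg.aemeasurable).mp hfg]
    _ = 0 := by simp [Measure.prod_apply hdiag, hslice, hg_atomless]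

theorem map_const_mul_singleton_eq_zero {Ω : Type*} [MeasurableSpace Ω] {μ : Measure Ω}
    {X : Ω → ℝ} (hX : Measurable X) (hX_atomless : ∀ c, μ.map X {c} = 0) {a : ℝ} (ha : a ≠ 0)
    (c : ℝ) : μ.map (fun ω => a * X ω) {c} = 0 := by
  have hpre : (fun ω => a * X ω) ⁻¹' {c} = X ⁻¹' {c / a} := by
    ext ω; simp [eq_div_iff ha, mul_comm]
  rw [Measure.map_apply (hX.const_mul a) (measurableSet_singleton c), hpre,
    ← Measure.map_apply hX (measurableSet_singleton _), hX_atomless]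

theorem ProbabilityTheory.iIndepFun.measure_sum_mul_eq_zero_eq_zero {Ω ι : Type*}
    [MeasurableSpace Ω] {μ : Measure Ω} [IsProbabilityMeasure μ] {X : ι → Ω → ℝ}
    (hindep : iIndepFun X μ) (hX : ∀ l, Measurable (X l)) {s : Finset ι} {i : ι} (hi : i ∈ s)
    (hX_atomless : ∀ c, μ.map (X i) {c} = 0) {a : ι → ℝ} (ha : a i ≠ 0) :
    μ {ω | ∑ l ∈ s, a l * X l ω = 0} = 0 := by
  classical
  set Y : ι → Ω → ℝ := fun l ω => a l * X l ω
  have hY : ∀ l, Measurable (Y l) := fun l => (hX l).const_mul _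
  have hindepY : iIndepFun Y μ := hindep.comp (fun l x => a l * x) fun l => measurable_const_mul _
  have hrest : IndepFun (∑ l ∈ s.erase i, Y l) (-Y i) μ :=
    (hindepY.indepFun_finsetSum_of_notMem hY (s.notMem_erase i)).neg_right
  have hnegY : -Y i = fun ω => -a i * X i ω := by ext ω; simp [Y]
  have hevent :
      {ω | ∑ l ∈ s, a l * X l ω = 0} = {ω | (∑ l ∈ s.erase i, Y l) ω = (-Y i) ω} := by
    ext ω
    simp only [Set.mem_ofPred_eq, Finset.sum_apply, Pi.neg_apply, ← Finset.add_sum_erase s _ hi,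
      eq_neg_iff_add_eq_zero, add_comm, Y]
  rw [hevent]
  refine hrest.measure_setOf_eq_eq_zero (by fun_prop) (hY i).neg ?_
  rw [hnegY]
  exact map_const_mul_singleton_eq_zero (hX i) hX_atomless (neg_ne_zero.2 ha)

theorem Finset.sum_mul_eq_sum_ite_mul_of_eq_zero {ι R : Type*} [DecidableEq ι]
    [NonUnitalNonAssocSemiring R] {K : Finset ι} {v : ι → R} (hv : ∀ l ∉ K, v l = 0)
    (M : Finset ι) (w : ι → R) :
    ∑ l ∈ M, w l * v l = ∑ l ∈ K, (if l ∈ M then w l else 0) * v l := by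
  simp_rw [ite_mul, zero_mul, Finset.sum_ite_mem]
  exact (Finset.sum_subset Finset.inter_subset_right fun l hlM hl => by
    simp [hv l (by simpa [hlM] using hl)]).symm

theorem exists_mem_ite_sub_ite_ne_zero {ι R : Type*} [DecidableEq ι] [AddGroup R]
    {K M N : Finset ι} {w u : ι → R} (hw : ∀ l ∈ M, w l ≠ 0) (hu : ∀ l ∈ N, u l ≠ 0)
    (hne : M ∩ K ≠ N ∩ K) :
    ∃ l ∈ K, (if l ∈ M then w l else 0) - (if l ∈ N then u l else 0) ≠ 0 := by
  obtain ⟨l, hl⟩ : ∃ l, ¬(l ∈ M ∩ K ↔ l ∈ N ∩ K) := by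
    by_contra! h
    exact hne (Finset.ext h)
  by_cases hK : l ∈ K
  · refine ⟨l, hK, ?_⟩
    by_cases hM : l ∈ M <;> by_cases hN : l ∈ N <;> simp_all
  · simp [hK] at hl

/-- Theorem 1 / statement S1: two check node values whose neighborhoods have
different intersections with the support set `K` coincide with probability
zero. -/
theorem check_values_distinct_ae {Ω : Type*} [MeasurableSpace Ω]
    (μ : Measure Ω) [IsProbabilityMeasure μ]
    (n : ℕ) (K : Finset (Fin n)) (v : Fin n → Ω → ℝ)
    (hmeas : ∀ l, Measurable (v l))
    (hindep : iIndepFun (fun l : K => v l) μ)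
    (hatomless : ∀ l ∈ K, ∀ c : ℝ, μ.map (v l) {c} = 0)
    (hzero : ∀ l ∉ K, ∀ ω, v l ω = 0)
    (Mi Mj : Finset (Fin n)) (wi wj : Fin n → ℝ)
    (hwi : ∀ l ∈ Mi, wi l ≠ 0) (hwj : ∀ l ∈ Mj, wj l ≠ 0)
    (hne : Mi ∩ K ≠ Mj ∩ K) :
    μ {ω | ∑ l ∈ Mi, wi l * v l ω = ∑ l ∈ Mj, wj l * v l ω} = 0 := by
  obtain ⟨l₀, hl₀K, ha⟩ := exists_mem_ite_sub_ite_ne_zero hwi hwj hne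
  set a : Fin n → ℝ := fun l => (if l ∈ Mi then wi l else 0) - (if l ∈ Mj then wj l else 0)
  have hevent : {ω | ∑ l ∈ Mi, wi l * v l ω = ∑ l ∈ Mj, wj l * v l ω}
      = {ω | ∑ l : K, a l * v l ω = 0} := by
    ext ω
    have hv : ∀ l ∉ K, v l ω = 0 := fun l hl => hzero l hl ω
    rw [Set.mem_ofPred_eq, Set.mem_ofPred_eq, Finset.sum_coe_sort K fun l => a l * v l ω,
      Finset.sum_mul_eq_sum_ite_mul_of_eq_zero hv Mi,
      Finset.sum_mul_eq_sum_ite_mul_of_eq_zero hv Mj,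
      ← sub_eq_zero, ← Finset.sum_sub_distrib]
    simp only [a, sub_mul]
  rw [hevent]
  exact hindep.measure_sum_mul_eq_zero_eq_zero (fun l => hmeas l) (Finset.mem_univ ⟨l₀, hl₀K⟩)
    (hatomless l₀ hl₀K) ha
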